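/- For all finite simple graphs G and H and every ℓ ≥ 1, the entanglement-assisted compound independence number with ℓ receivers is super-multiplicative with respect to the strong product: α*_{1,ℓ}(G ⊠ H) ≥ α*_{1,ℓ}(G) · α*_{1,ℓ}(H). -/

import Mathlib

open scoped BigOperators ComplexOrder
open Matrix

noncomputable section

namespace ZeroError

variable {V W : Type*}

/-- The independence number of a simple graph: the maximum cardinality of a set of
pairwise non-adjacent vertices. -/
def indepNum [Fintype V] (G : SimpleGraph V) : ℕ :=
  sSup {n | ∃ s : Finset V, s.card = n ∧ ∀ u ∈ s, ∀ v ∈ s, u ≠ v → ¬ G.Adj u v}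

/-- The strong product of two simple graphs. -/
def strongProd (G : SimpleGraph V) (H : SimpleGraph W) : SimpleGraph (V × W) where
  Adj x y := x ≠ y ∧ (x.1 = y.1 ∨ G.Adj x.1 y.1) ∧ (x.2 = y.2 ∨ H.Adj x.2 y.2)
  symm := by
    constructor
    rintro x y ⟨hne, h1, h2⟩
    exact ⟨hne.symm, h1.imp Eq.symm (fun a => a.symm), h2.imp Eq.symm (fun a => a.symm)⟩
  loopless := by constructor; rintro x ⟨hne, -⟩; exact hne rfl

/-- The n-fold strong power of a simple graph. -/
def strongPow (G : SimpleGraph V) (n : ℕ) : SimpleGraph (Fin n → V) where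
  Adj u v := u ≠ v ∧ ∀ i, u i = v i ∨ G.Adj (u i) (v i)
  symm := by
    constructor
    rintro u v ⟨hne, h⟩
    exact ⟨hne.symm, fun i => (h i).imp Eq.symm (fun a => a.symm)⟩
  loopless := by constructor; rintro u ⟨hne, -⟩; exact hne rfl

/-- `copies G ℓ` is the disjoint union `G^{+ℓ}` of ℓ copies of `G`. -/
def copies (G : SimpleGraph V) (ℓ : ℕ) : SimpleGraph (V × Fin ℓ) where
  Adj x y := x.2 = y.2 ∧ G.Adj x.1 y.1
  symm := by constructor; rintro x y ⟨h1, h2⟩; exact ⟨h1.symm, h2.symm⟩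
  loopless := by constructor; rintro x ⟨-, h⟩; exact G.loopless.irrefl _ h

/-- The Cartesian product `G □ K_t` of a graph with the complete graph on `t` vertices. -/
def cartProdK (G : SimpleGraph V) (t : ℕ) : SimpleGraph (V × Fin t) where
  Adj x y := (G.Adj x.1 y.1 ∧ x.2 = y.2) ∨ (x.1 = y.1 ∧ x.2 ≠ y.2)
  symm := by
    constructor
    rintro x y (⟨h1, h2⟩ | ⟨h1, h2⟩)
    · exact Or.inl ⟨h1.symm, h2.symm⟩
    · exact Or.inr ⟨h1.symm, h2.symm⟩
  loopless := by constructor; rintro x (⟨h, -⟩ | ⟨-, h⟩); exacts [G.loopless.irrefl _ h, h rfl]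

/-- The chromatic number: the least number of colors of a proper coloring. -/
def chromNum [Fintype V] (G : SimpleGraph V) : ℕ :=
  sInf {m | ∃ c : V → Fin m, ∀ u v, G.Adj u v → c u ≠ c v}

/-- The entanglement-assisted independence number `α*(G)`. -/
def qIndepNum [Fintype V] (G : SimpleGraph V) : ℕ :=
  sSup {m | ∃ (d : ℕ) (ρ : Matrix (Fin d) (Fin d) ℂ)
      (σ : Fin m → V → Matrix (Fin d) (Fin d) ℂ),
    ρ.PosSemidef ∧ ρ.trace = 1 ∧ (∀ i u, (σ i u).PosSemidef) ∧
    (∀ i, ∑ u, σ i u = ρ) ∧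
    ∀ i j u v, i ≠ j → (u = v ∨ G.Adj u v) → σ i u * σ j v = 0}

/-- The entanglement-assisted chromatic number `χ*(G)`. -/
def qChromNum [Fintype V] (G : SimpleGraph V) : ℕ :=
  sInf {m | ∃ (d : ℕ) (ρ : Matrix (Fin d) (Fin d) ℂ)
      (σ : V → Fin m → Matrix (Fin d) (Fin d) ℂ),
    ρ.PosSemidef ∧ ρ.trace = 1 ∧ (∀ x i, (σ x i).PosSemidef) ∧
    (∀ x, ∑ i, σ x i = ρ) ∧
    ∀ x y i, G.Adj x y → σ x i * σ y i = 0}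

/-- The partial trace onto the k-th tensor factor:
`(Tr_{B_{-k}} M)_{a,b} = Σ M_{s,t}` over tuples `s, t` with `s k = a`, `t k = b` and
`s r = t r` for all `r ≠ k`. -/
def ptraceK {d ℓ : ℕ} (k : Fin ℓ)
    (M : Matrix (Fin ℓ → Fin d) (Fin ℓ → Fin d) ℂ) : Matrix (Fin d) (Fin d) ℂ :=
  Matrix.of fun a b => ∑ s : Fin ℓ → Fin d, ∑ t : Fin ℓ → Fin d,
    if s k = a ∧ t k = b ∧ ∀ r, r ≠ k → s r = t r then M s t else 0

/-- The entanglement-assisted compound independence number `α*_{1,ℓ}(G)` with ℓ receivers. -/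
def qCompoundNum [Fintype V] (G : SimpleGraph V) (ℓ : ℕ) : ℕ :=
  sSup {m | ∃ (d : ℕ) (ρ : Matrix (Fin ℓ → Fin d) (Fin ℓ → Fin d) ℂ)
      (σ : Fin m → V → Matrix (Fin ℓ → Fin d) (Fin ℓ → Fin d) ℂ),
    ρ.PosSemidef ∧ ρ.trace = 1 ∧ (∀ i u, (σ i u).PosSemidef) ∧
    (∀ i, ∑ u, σ i u = ρ) ∧
    ∀ (k : Fin ℓ) i j u v, i ≠ j → (u = v ∨ G.Adj u v) →
      ptraceK k (σ i u) * ptraceK k (σ j v) = 0}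

/-- The Shannon capacity `c(G) = sup_{n ≥ 1} (1/n) log₂ α(G^{⊠n})`. -/
def shannonCap [Fintype V] (G : SimpleGraph V) : ℝ :=
  ⨆ n : ℕ+, Real.logb 2 (indepNum (strongPow G (n : ℕ))) / ((n : ℕ) : ℝ)

/-- The entangled Shannon capacity `c*(G) = sup_{n ≥ 1} (1/n) log₂ α*(G^{⊠n})`. -/
def qShannonCap [Fintype V] (G : SimpleGraph V) : ℝ :=
  ⨆ n : ℕ+, Real.logb 2 (qIndepNum (strongPow G (n : ℕ))) / ((n : ℕ) : ℝ)

/-- The entanglement-assisted compound Shannon capacity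
`c*_{1,ℓ}(G) = sup_{n ≥ 1} (1/n) log₂ α*_{1,ℓ}(G^{⊠n})`. -/
def qCompoundCap [Fintype V] (G : SimpleGraph V) (ℓ : ℕ) : ℝ :=
  ⨆ n : ℕ+, Real.logb 2 (qCompoundNum (strongPow G (n : ℕ)) ℓ) / ((n : ℕ) : ℝ)

/-- The edge-clique cover number `θ_e(G)`: the least number of cliques covering all edges. -/
def edgeCliqueCoverNum [Fintype V] (G : SimpleGraph V) : ℕ :=
  sInf {n | ∃ F : Finset (Finset V), F.card = n ∧ (∀ c ∈ F, G.IsClique (c : Set V)) ∧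
    ∀ u v, G.Adj u v → ∃ c ∈ F, u ∈ c ∧ v ∈ c}

/-- `θ'_e(G)`: the edge-clique cover number plus the number of isolated vertices. -/
def thetaPrime [Fintype V] (G : SimpleGraph V) : ℕ :=
  edgeCliqueCoverNum G + {v : V | ∀ u, ¬ G.Adj v u}.ncard

/-- `f` is an orthogonal representation of `G` in dimension `d`. -/
def IsOrthRep (G : SimpleGraph V) (d : ℕ) (f : V → EuclideanSpace ℂ (Fin d)) : Prop :=
  (∀ v, ‖f v‖ = 1) ∧ ∀ u v, G.Adj u v → inner ℂ (f u) (f v) = (0 : ℂ)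

/-- The orthogonal rank `ξ(G)`. -/
def orthRank (G : SimpleGraph V) : ℕ :=
  sInf {d | ∃ f : V → EuclideanSpace ℂ (Fin d), IsOrthRep G d f}

/-- Vertices of the quarter orthogonality graph `Γ_k`: ±1-vectors of length `k+1`
with first coordinate 1 and an even number of -1 entries. -/
def QOVertex (k : ℕ) : Type :=
  {u : Fin (k + 1) → ℤ // (∀ i, u i = 1 ∨ u i = -1) ∧ u 0 = 1 ∧
    Even ((Finset.univ.filter fun i => u i = -1).card)}

instance (k : ℕ) : Fintype (QOVertex k) :=
  Fintype.ofInjective (fun u : QOVertex k => fun i => decide (u.val i = 1))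
    (by
      intro u v h
      apply Subtype.ext; funext i
      have hi := congrFun h i
      rcases u.prop.1 i with h1 | h1 <;> rcases v.prop.1 i with h2 | h2 <;>
        simp [h1, h2] at hi ⊢)

/-- The quarter orthogonality graph `Γ_k`. -/
def quarterOrthGraph (k : ℕ) : SimpleGraph (QOVertex k) where
  Adj u v := u ≠ v ∧ ∑ i, u.val i * v.val i = 0
  symm := by
    constructor
    rintro u v ⟨hne, h⟩
    refine ⟨hne.symm, ?_⟩
    rw [← h]
    exact Finset.sum_congr rfl fun i _ => mul_comm _ _
  loopless := by constructor; rintro u ⟨hne, -⟩; exact hne rfl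

/-- Vertices of the orthogonality graph `Ω_k`: all ±1-vectors of length `k`. -/
def PMVertex (k : ℕ) : Type :=
  {u : Fin k → ℤ // ∀ i, u i = 1 ∨ u i = -1}

instance (k : ℕ) : Fintype (PMVertex k) :=
  Fintype.ofInjective (fun u : PMVertex k => fun i => decide (u.val i = 1))
    (by
      intro u v h
      apply Subtype.ext; funext i
      have hi := congrFun h i
      rcases u.prop i with h1 | h1 <;> rcases v.prop i with h2 | h2 <;>
        simp [h1, h2] at hi ⊢)

/-- The orthogonality graph `Ω_k`. -/
def orthGraph (k : ℕ) : SimpleGraph (PMVertex k) where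
  Adj u v := u ≠ v ∧ ∑ i, u.val i * v.val i = 0
  symm := by
    constructor
    rintro u v ⟨hne, h⟩
    refine ⟨hne.symm, ?_⟩
    rw [← h]
    exact Finset.sum_congr rfl fun i _ => mul_comm _ _
  loopless := by constructor; rintro u ⟨hne, -⟩; exact hne rfl

end ZeroError

/-!
Tensoring optimal strategies for `G` and `H` gives a strategy for `G ⊠ H` whose messages are
pairs: the partial traces of a product state are products of partial traces, so two distinct
pairs are kept apart by whichever coordinate differs.

The substance is that `α*_{1,ℓ}` is attained at all (in `ℕ` an unbounded `sSup` would be `0`):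
a feasible `m` is at most `|V|`. For a fixed vertex `u` the reduced operators `Tr_{B_{-k}} σ_i^u`
are pairwise orthogonal and each lies below `Tr_{B_{-k}} ρ`, so their eigenvectors with nonzero
eigenvalues form one orthonormal family and Bessel's inequality bounds their total trace by `1`;
for a fixed message `i` they sum to exactly `1` over `u`.
-/

lemma RCLike.re_star_mul_self {𝕜 : Type*} [RCLike 𝕜] (z : 𝕜) :
    RCLike.re (star z * z) = ‖z‖ ^ 2 := by
  rw [RCLike.star_def, RCLike.conj_mul, ← RCLike.ofReal_pow, RCLike.ofReal_re]

namespace Matrix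

section

open scoped Kronecker

variable {ι κ l m n p R : Type*}

lemma submatrix_sum [AddCommMonoid R] (s : Finset ι) (A : ι → Matrix m n R) (r : l → m)
    (c : p → n) : (∑ i ∈ s, A i).submatrix r c = ∑ i ∈ s, (A i).submatrix r c := by
  ext; simp [Matrix.sum_apply]

lemma sum_kronecker_sum [NonUnitalNonAssocSemiring R] (s : Finset ι) (t : Finset κ)
    (A : ι → Matrix l m R) (B : κ → Matrix n p R) :
    (∑ i ∈ s, A i) ⊗ₖ (∑ j ∈ t, B j) = ∑ i ∈ s, ∑ j ∈ t, A i ⊗ₖ B j := by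
  ext ⟨_, _⟩ ⟨_, _⟩; simp [Matrix.sum_apply, Finset.sum_mul_sum]

lemma trace_submatrix_equiv [AddCommMonoid R] [Fintype m] [Fintype n] (e : m ≃ n)
    (A : Matrix n n R) : (A.submatrix e e).trace = A.trace :=
  e.sum_comp fun i => A i i

end

section

variable {𝕜 n : Type*} [RCLike 𝕜] [Fintype n] [DecidableEq n]

open scoped MatrixOrder in
lemma PosSemidef.exists_eq_conjTranspose_mul_self {A : Matrix n n 𝕜}
    (hA : A.PosSemidef) : ∃ B : Matrix n n 𝕜, A = Bᴴ * B := by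
  obtain ⟨B, rfl⟩ := CStarAlgebra.nonneg_iff_eq_star_mul_self.mp hA.nonneg
  exact ⟨B, rfl⟩

lemma IsHermitian.eigenvalues_le_of_posSemidef_sub {A B : Matrix n n 𝕜} (hA : A.IsHermitian)
    (hBA : (B - A).PosSemidef) (i : n) :
    hA.eigenvalues i ≤
      RCLike.re (star ⇑(hA.eigenvectorBasis i) ⬝ᵥ (B *ᵥ ⇑(hA.eigenvectorBasis i))) := by
  have := hBA.re_dotProduct_nonneg (hA.eigenvectorBasis i)
  rw [sub_mulVec, dotProduct_sub, map_sub] at this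
  linarith [hA.eigenvalues_eq i]

lemma IsHermitian.inner_eigenvectorBasis_eq_zero_of_mul_eq_zero {A B : Matrix n n 𝕜}
    (hA : A.IsHermitian) (hB : B.IsHermitian) (hAB : A * B = 0) {i j : n}
    (hi : hA.eigenvalues i ≠ 0) (hj : hB.eigenvalues j ≠ 0) :
    inner 𝕜 (hA.eigenvectorBasis i) (hB.eigenvectorBasis j) = 0 := by
  set v := ⇑(hA.eigenvectorBasis i)
  set w := ⇑(hB.eigenvectorBasis j)
  have hvA : star v ᵥ* A = hA.eigenvalues i • star v := by
    have h := star_mulVec A v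
    rwa [hA.eq, hA.mulVec_eigenvectorBasis, star_smul, star_trivial, eq_comm] at h
  have : (hA.eigenvalues i : 𝕜) * hB.eigenvalues j * (star v ⬝ᵥ w) = 0 := by
    calc _ = star v ⬝ᵥ ((A * B) *ᵥ w) := by
          rw [← mulVec_mulVec, dotProduct_mulVec, hvA, hB.mulVec_eigenvectorBasis,
            RCLike.real_smul_eq_coe_smul (K := 𝕜), RCLike.real_smul_eq_coe_smul (K := 𝕜),
            dotProduct_smul, smul_dotProduct]
          simp only [smul_eq_mul]; ring
      _ = 0 := by rw [hAB, zero_mulVec, dotProduct_zero]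
  rw [EuclideanSpace.inner_eq_star_dotProduct, dotProduct_comm]
  simpa [hi, hj] using this

lemma PosSemidef.sum_re_dotProduct_mulVec_le_re_trace {ι : Type*} [Fintype ι]
    {R : Matrix n n 𝕜} (hR : R.PosSemidef) {v : ι → EuclideanSpace 𝕜 n} (hv : Orthonormal 𝕜 v) :
    ∑ i, RCLike.re (star ⇑(v i) ⬝ᵥ (R *ᵥ ⇑(v i))) ≤ RCLike.re R.trace := by
  obtain ⟨B, rfl⟩ := hR.exists_eq_conjTranspose_mul_self
  -- Bessel's inequality for the conjugated rows `b c` of `B`, summed over `c`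
  let b : n → EuclideanSpace 𝕜 n := fun c => WithLp.toLp 2 (star (B c))
  have hquad (x : EuclideanSpace 𝕜 n) :
      RCLike.re (star ⇑x ⬝ᵥ ((Bᴴ * B) *ᵥ ⇑x)) = ∑ c, ‖inner 𝕜 (b c) x‖ ^ 2 := by
    rw [← mulVec_mulVec, dotProduct_mulVec, vecMul_conjTranspose, star_star, dotProduct, map_sum]
    refine Finset.sum_congr rfl fun c _ => ?_
    rw [EuclideanSpace.inner_eq_star_dotProduct]
    simp only [b, star_star, Pi.star_apply, mulVec, dotProduct_comm]
    exact RCLike.re_star_mul_self _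
  have htrace : RCLike.re (Bᴴ * B).trace = ∑ c, ‖b c‖ ^ 2 := by
    simp only [trace, diag, mul_apply, conjTranspose_apply, map_sum, b, EuclideanSpace.norm_sq_eq]
    rw [Finset.sum_comm]
    simp only [Pi.star_apply, norm_star, RCLike.re_star_mul_self]
  calc ∑ i, RCLike.re (star ⇑(v i) ⬝ᵥ ((Bᴴ * B) *ᵥ ⇑(v i)))
      = ∑ c, ∑ i, ‖inner 𝕜 (v i) (b c)‖ ^ 2 := by
        simp_rw [hquad, ← norm_inner_symm (b _)]
        exact Finset.sum_comm
    _ ≤ ∑ c, ‖b c‖ ^ 2 := Finset.sum_le_sum fun c _ => hv.sum_inner_products_le (b c)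
    _ = _ := htrace.symm

lemma sum_re_trace_le_of_pairwise_mul_eq_zero {ι : Type*} [Fintype ι] {R : Matrix n n 𝕜}
    {τ : ι → Matrix n n 𝕜} (hR : R.PosSemidef) (hτ : ∀ i, (τ i).PosSemidef)
    (hle : ∀ i, (R - τ i).PosSemidef) (horth : Pairwise fun i j => τ i * τ j = 0) :
    ∑ i, RCLike.re (τ i).trace ≤ RCLike.re R.trace := by
  let μ (p : ι × n) : ℝ := (hτ p.1).1.eigenvalues p.2
  let S := {p : ι × n // μ p ≠ 0}
  let v (p : S) : EuclideanSpace 𝕜 n := (hτ p.1.1).1.eigenvectorBasis p.1.2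
  have hv : Orthonormal 𝕜 v := by
    refine ⟨fun p => (hτ p.1.1).1.eigenvectorBasis.orthonormal.1 _, ?_⟩
    rintro ⟨⟨i, r⟩, hp⟩ ⟨⟨j, s⟩, hq⟩ hne
    by_cases hij : i = j
    · subst hij
      exact (hτ i).1.eigenvectorBasis.orthonormal.2 fun (hrs : r = s) => hne (by subst hrs; rfl)
    · exact (hτ i).1.inner_eigenvectorBasis_eq_zero_of_mul_eq_zero (hτ j).1 (horth hij) hp hq
  calc ∑ i, RCLike.re (τ i).trace = ∑ p, μ p := by
        simp [Fintype.sum_prod_type, μ, (hτ _).1.trace_eq_sum_eigenvalues]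
    _ = ∑ p : S, μ p := by
        rw [← Finset.sum_filter_ne_zero, Finset.sum_subtype]
        simp
    _ ≤ ∑ p : S, RCLike.re (star ⇑(v p) ⬝ᵥ (R *ᵥ ⇑(v p))) :=
        Finset.sum_le_sum fun p _ => (hτ p.1.1).1.eigenvalues_le_of_posSemidef_sub (hle _) _
    _ ≤ RCLike.re R.trace := hR.sum_re_dotProduct_mulVec_le_re_trace hv

end

end Matrix

namespace ZeroError

open scoped Kronecker

section PartialTrace

variable {ι α β γ : Type*}

def splitTuple (e : α ≃ β × γ) : (ι → α) ≃ (ι → β) × (ι → γ) :=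
  (Equiv.arrowCongr (Equiv.refl ι) e).trans (Equiv.arrowProdEquivProdArrow _ _ _)

@[simp]
lemma splitTuple_apply (e : α ≃ β × γ) (s : ι → α) :
    splitTuple e s = (fun r => (e (s r)).1, fun r => (e (s r)).2) := rfl

variable [DecidableEq ι]

def extendAt (k : ι) (f : {r // r ≠ k} → α) (a : α) : ι → α :=
  (Equiv.funSplitAt k α).symm (a, f)

@[simp]
lemma extendAt_self (k : ι) (f : {r // r ≠ k} → α) (a : α) : extendAt k f a k = a := by
  simp [extendAt]

lemma comp_extendAt (φ : α → β) (k : ι) (f : {r // r ≠ k} → α) (a : α) :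
    φ ∘ extendAt k f a = extendAt k (φ ∘ f) (φ a) := by
  funext r
  by_cases h : r = k
  · subst h; simp
  · simp [extendAt, Equiv.funSplitAt_symm_apply, h]

lemma forall_ne_extendAt_eq_extendAt_iff (k : ι) (f f' : {r // r ≠ k} → α) (a a' : α) :
    (∀ r, r ≠ k → extendAt k f a r = extendAt k f' a' r) ↔ f = f' := by
  simp +contextual [extendAt, funext_iff, Equiv.funSplitAt_symm_apply, Subtype.forall]

variable {d ℓ : ℕ}

lemma ptraceK_eq_sum_submatrix (k : Fin ℓ) (M : Matrix (Fin ℓ → Fin d) (Fin ℓ → Fin d) ℂ) :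
    ptraceK k M = ∑ f, M.submatrix (extendAt k f) (extendAt k f) := by
  ext a b
  set e := (Equiv.funSplitAt k (Fin d)).symm
  simp only [ptraceK, of_apply, Matrix.sum_apply, submatrix_apply]
  rw [← e.sum_comp]
  simp_rw [← e.sum_comp (fun t => if _ ∧ t k = b ∧ _ then M _ t else 0), Fintype.sum_prod_type]
  have he (x) : e x = extendAt k x.2 x.1 := rfl
  simp only [he, forall_ne_extendAt_eq_extendAt_iff, extendAt_self]
  simp [ite_and]

lemma ptraceK_posSemidef (k : Fin ℓ) {M : Matrix (Fin ℓ → Fin d) (Fin ℓ → Fin d) ℂ}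
    (hM : M.PosSemidef) : (ptraceK k M).PosSemidef := by
  rw [ptraceK_eq_sum_submatrix]
  exact posSemidef_sum _ fun f _ => hM.submatrix _

lemma trace_ptraceK (k : Fin ℓ) (M : Matrix (Fin ℓ → Fin d) (Fin ℓ → Fin d) ℂ) :
    (ptraceK k M).trace = M.trace := by
  rw [ptraceK_eq_sum_submatrix, trace_sum, trace, ← (Equiv.funSplitAt k (Fin d)).symm.sum_comp,
    Fintype.sum_prod_type, Finset.sum_comm]
  rfl

lemma ptraceK_sum {κ : Type*} (k : Fin ℓ) (s : Finset κ)
    (M : κ → Matrix (Fin ℓ → Fin d) (Fin ℓ → Fin d) ℂ) :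
    ptraceK k (∑ i ∈ s, M i) = ∑ i ∈ s, ptraceK k (M i) := by
  simp only [ptraceK_eq_sum_submatrix, submatrix_sum]
  exact Finset.sum_comm

lemma ptraceK_kronecker_submatrix {D d₁ d₂ : ℕ} (k : Fin ℓ) (e : Fin D ≃ Fin d₁ × Fin d₂)
    (A : Matrix (Fin ℓ → Fin d₁) (Fin ℓ → Fin d₁) ℂ)
    (B : Matrix (Fin ℓ → Fin d₂) (Fin ℓ → Fin d₂) ℂ) :
    ptraceK k ((A ⊗ₖ B).submatrix (splitTuple e) (splitTuple e))
      = (ptraceK k A ⊗ₖ ptraceK k B).submatrix e e := by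
  have hsplit (F : {r // r ≠ k} → Fin D) :
      splitTuple e ∘ extendAt k F = Prod.map (extendAt k (splitTuple e F).1)
        (extendAt k (splitTuple e F).2) ∘ e := by
    funext a
    simp only [Function.comp_apply, splitTuple_apply]
    rw [← Function.comp_def (fun x => (e x).1), ← Function.comp_def (fun x => (e x).2),
      comp_extendAt, comp_extendAt]
    rfl
  simp only [ptraceK_eq_sum_submatrix, sum_kronecker_sum, submatrix_sum, submatrix_submatrix,
    hsplit]
  rw [← Fintype.sum_prod_type', ← (splitTuple e).sum_comp]
  rfl

end PartialTrace

lemma eq_or_adj_of_eq_or_strongProd_adj {V W : Type*} {G : SimpleGraph V} {H : SimpleGraph W}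
    {p q : V × W} (h : p = q ∨ (strongProd G H).Adj p q) :
    (p.1 = q.1 ∨ G.Adj p.1 q.1) ∧ (p.2 = q.2 ∨ H.Adj p.2 q.2) := by
  rcases h with rfl | h
  · exact ⟨.inl rfl, .inl rfl⟩
  · exact h.2

section CompoundSet

variable {U V W : Type*} [Fintype U] [Fintype V] [Fintype W]

def qCompoundSet (G : SimpleGraph U) (ℓ : ℕ) : Set ℕ :=
  {m | ∃ (d : ℕ) (ρ : Matrix (Fin ℓ → Fin d) (Fin ℓ → Fin d) ℂ)
      (σ : Fin m → U → Matrix (Fin ℓ → Fin d) (Fin ℓ → Fin d) ℂ),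
    ρ.PosSemidef ∧ ρ.trace = 1 ∧ (∀ i u, (σ i u).PosSemidef) ∧
    (∀ i, ∑ u, σ i u = ρ) ∧
    ∀ (k : Fin ℓ) i j u v, i ≠ j → (u = v ∨ G.Adj u v) →
      ptraceK k (σ i u) * ptraceK k (σ j v) = 0}

lemma zero_mem_qCompoundSet (G : SimpleGraph U) (ℓ : ℕ) : 0 ∈ qCompoundSet G ℓ :=
  ⟨1, 1, finZeroElim, .one, by simp, finZeroElim, finZeroElim, fun _ i => i.elim0⟩

lemma le_card_of_mem_qCompoundSet {G : SimpleGraph U} {ℓ m : ℕ} (hℓ : 0 < ℓ)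
    (hm : m ∈ qCompoundSet G ℓ) : m ≤ Fintype.card U := by
  classical
  obtain ⟨d, ρ, σ, hρ, htr, hσ, hsum, horth⟩ := hm
  let k : Fin ℓ := ⟨0, hℓ⟩
  let τ i u := ptraceK k (σ i u)
  have hτ i u : (τ i u).PosSemidef := ptraceK_posSemidef k (hσ i u)
  have hτsum i : ∑ u, τ i u = ptraceK k ρ := by rw [← hsum i, ptraceK_sum]
  have hρtr : RCLike.re (ptraceK k ρ).trace = 1 := by simp [trace_ptraceK, htr]
  have hfiber u : ∑ i, RCLike.re (τ i u).trace ≤ 1 := by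
    refine hρtr ▸ Matrix.sum_re_trace_le_of_pairwise_mul_eq_zero (ptraceK_posSemidef k hρ)
      (fun i => hτ i u) (fun i => ?_) (fun i j hij => horth k i j u u hij (.inl rfl))
    rw [← hτsum i, ← Finset.sum_erase_add _ _ (Finset.mem_univ u), add_sub_cancel_right]
    exact posSemidef_sum _ fun v _ => hτ i v
  have hrow i : ∑ u, RCLike.re (τ i u).trace = 1 := by
    rw [← map_sum, ← trace_sum, hτsum i, hρtr]
  have : (m : ℝ) ≤ Fintype.card U :=
    calc (m : ℝ) = ∑ i, ∑ u, RCLike.re (τ i u).trace := by simp only [hrow]; simp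
      _ = ∑ u, ∑ i, RCLike.re (τ i u).trace := Finset.sum_comm
      _ ≤ ∑ _u : U, (1 : ℝ) := Finset.sum_le_sum fun u _ => hfiber u
      _ = Fintype.card U := by simp
  exact_mod_cast this

lemma bddAbove_qCompoundSet (G : SimpleGraph U) {ℓ : ℕ} (hℓ : 0 < ℓ) :
    BddAbove (qCompoundSet G ℓ) :=
  ⟨Fintype.card U, fun _ => le_card_of_mem_qCompoundSet hℓ⟩

lemma qCompoundNum_mem_qCompoundSet (G : SimpleGraph U) {ℓ : ℕ} (hℓ : 0 < ℓ) :
    qCompoundNum G ℓ ∈ qCompoundSet G ℓ :=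
  Nat.sSup_mem ⟨0, zero_mem_qCompoundSet G ℓ⟩ (bddAbove_qCompoundSet G hℓ)

lemma mul_mem_qCompoundSet_strongProd {G : SimpleGraph V} {H : SimpleGraph W} {ℓ a b : ℕ}
    (ha : a ∈ qCompoundSet G ℓ) (hb : b ∈ qCompoundSet H ℓ) :
    a * b ∈ qCompoundSet (strongProd G H) ℓ := by
  obtain ⟨d₁, ρ₁, σ₁, hρ₁, htr₁, hσ₁, hsum₁, horth₁⟩ := ha
  obtain ⟨d₂, ρ₂, σ₂, hρ₂, htr₂, hσ₂, hsum₂, horth₂⟩ := hb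
  let E := splitTuple (ι := Fin ℓ) (finProdFinEquiv (m := d₁) (n := d₂)).symm
  let pair := (finProdFinEquiv (m := a) (n := b)).symm
  refine ⟨d₁ * d₂, (ρ₁ ⊗ₖ ρ₂).submatrix E E,
    fun i p => (σ₁ (pair i).1 p.1 ⊗ₖ σ₂ (pair i).2 p.2).submatrix E E, ?_, ?_, ?_, ?_, ?_⟩
  · exact (hρ₁.kronecker hρ₂).submatrix _
  · rw [trace_submatrix_equiv, trace_kronecker, htr₁, htr₂, one_mul]
  · exact fun i p => ((hσ₁ _ _).kronecker (hσ₂ _ _)).submatrix _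
  · intro i
    rw [← hsum₁ (pair i).1, ← hsum₂ (pair i).2, sum_kronecker_sum, submatrix_sum,
      Fintype.sum_prod_type]
    simp only [submatrix_sum]
  · intro k i j p q hij hpq
    rw [ptraceK_kronecker_submatrix, ptraceK_kronecker_submatrix, submatrix_mul_equiv,
      ← mul_kronecker_mul]
    obtain ⟨hpq₁, hpq₂⟩ := eq_or_adj_of_eq_or_strongProd_adj hpq
    have hij' : (pair i).1 ≠ (pair j).1 ∨ (pair i).2 ≠ (pair j).2 := by
      rw [← not_and_or, ← Prod.ext_iff]
      exact pair.injective.ne hij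
    rcases hij' with h | h
    · rw [horth₁ k _ _ _ _ h hpq₁, zero_kronecker, submatrix_zero]; rfl
    · rw [horth₂ k _ _ _ _ h hpq₂, kronecker_zero, submatrix_zero]; rfl

end CompoundSet

/-- super-multiplicativity of the entanglement-assisted compound
independence number: `α*_{1,ℓ}(G ⊠ H) ≥ α*_{1,ℓ}(G) · α*_{1,ℓ}(H)`. -/
theorem qCompound_supermultiplicative {V W : Type} [Fintype V] [Fintype W]
    (G : SimpleGraph V) (H : SimpleGraph W) (ℓ : ℕ) (hℓ : 1 ≤ ℓ) :
    qCompoundNum G ℓ * qCompoundNum H ℓ ≤ qCompoundNum (strongProd G H) ℓ :=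
  le_csSup (bddAbove_qCompoundSet _ hℓ) <| mul_mem_qCompoundSet_strongProd
    (qCompoundNum_mem_qCompoundSet G hℓ) (qCompoundNum_mem_qCompoundSet H hℓ)

end ZeroError
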